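/- arXiv:2311.15799 — 2 statements merged into one kernel-verified Lean document; each statement's English description precedes it below -/
import Mathlib

section
/- If the improving feasible direction at a non-optimal basic feasible solution x is chosen as y⁰ = x̃ - x for some basic feasible solution x̃ with cᵀx̃ < cᵀx, then the nonbasic support of y⁰ has cardinality at most m, and hence the number of consecutive degenerate antistalling pivots at x is at most min{n - m - 1, m - 1}. -/
open Matrix Finset

/-- The `m × m` submatrix of `A` formed by the columns indexed by the basis `β`. -/
def subCols {m n : ℕ} (A : Matrix (Fin m) (Fin n) ℝ) (β : Fin m ↪ Fin n) :
    Matrix (Fin m) (Fin m) ℝ :=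
  Matrix.of fun i k => A i (β k)

/-- The nonbasic index set `N = [n] \ B`. -/
def nonbasic {m n : ℕ} (β : Fin m ↪ Fin n) : Finset (Fin n) :=
  Finset.univ \ Finset.univ.image ⇑β

/-- The entry `Ā_{i f} = (A_B⁻¹ A)_{i f}` (column `f` of `A_B⁻¹ A`). -/
noncomputable def Abar {m n : ℕ} (A : Matrix (Fin m) (Fin n) ℝ) (β : Fin m ↪ Fin n)
    (f : Fin n) (i : Fin m) : ℝ :=
  ((subCols A β)⁻¹.mulVec (fun r => A r f)) i

/-- The reduced cost `c̄_j = c_j - ((A_B⁻¹ A_N)ᵀ c_B)_j`. -/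
noncomputable def redCost {m n : ℕ} (A : Matrix (Fin m) (Fin n) ℝ) (c : Fin n → ℝ)
    (β : Fin m ↪ Fin n) (j : Fin n) : ℝ :=
  c j - ∑ i, Abar A β j i * c (β i)

/-- Feasibility for the LP `min cᵀx, Ax = b, x ≥ 0`. -/
def IsFeasible {m n : ℕ} (A : Matrix (Fin m) (Fin n) ℝ) (b : Fin m → ℝ)
    (x : Fin n → ℝ) : Prop :=
  A.mulVec x = b ∧ ∀ j, 0 ≤ x j

/-- `x` is the basic feasible solution associated with the basis `β`. -/
def IsBasicFeasible {m n : ℕ} (A : Matrix (Fin m) (Fin n) ℝ) (b : Fin m → ℝ)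
    (x : Fin n → ℝ) (β : Fin m ↪ Fin n) : Prop :=
  IsUnit (subCols A β) ∧ IsFeasible A b x ∧ ∀ j ∈ nonbasic β, x j = 0

/-- `x` is a basic feasible solution (for some basis). -/
def IsBFS {m n : ℕ} (A : Matrix (Fin m) (Fin n) ℝ) (b : Fin m → ℝ)
    (x : Fin n → ℝ) : Prop :=
  ∃ β : Fin m ↪ Fin n, IsBasicFeasible A b x β

/-- `β` is a feasible basis. -/
def IsFeasibleBasis {m n : ℕ} (A : Matrix (Fin m) (Fin n) ℝ) (b : Fin m → ℝ)
    (β : Fin m ↪ Fin n) : Prop :=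
  IsUnit (subCols A β) ∧ ∃ x, IsFeasible A b x ∧ ∀ j ∈ nonbasic β, x j = 0


lemma aux_zero {m n : ℕ} (A : Matrix (Fin m) (Fin n) ℝ)
    (β : Fin m ↪ Fin n) (hU : IsUnit (subCols A β)) (v : Fin n → ℝ)
    (hAv : A.mulVec v = 0) (hN : ∀ j ∈ nonbasic β, v j = 0) : v = 0 := by
  have hw : (subCols A β).mulVec (fun k => v (β k)) = 0 := by
    funext i
    have hsum : A.mulVec v i = ∑ k, A i (β k) * v (β k) := by
      rw [Matrix.mulVec, dotProduct]
      have himg : ∑ j ∈ Finset.univ.image ⇑β, A i j * v j = ∑ k, A i (β k) * v (β k) :=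
        Finset.sum_image (fun a _ b _ h => β.injective h)
      rw [← himg]
      refine (Finset.sum_subset (Finset.subset_univ _) ?_).symm
      intro j _ hj
      have hjn : j ∈ nonbasic β := by simp [nonbasic, hj]
      rw [hN j hjn, mul_zero]
    calc (subCols A β).mulVec (fun k => v (β k)) i
        = ∑ k, A i (β k) * v (β k) := by
          simp [subCols, Matrix.mulVec, dotProduct]
      _ = A.mulVec v i := hsum.symm
      _ = 0 := by rw [hAv]; rfl
  have hdet := (Matrix.isUnit_iff_isUnit_det _).mp hU
  have hbasic : (fun k => v (β k)) = 0 := by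
    have h2 := congrArg ((subCols A β)⁻¹.mulVec) hw
    rwa [Matrix.mulVec_mulVec, Matrix.nonsing_inv_mul _ hdet, Matrix.one_mulVec,
      Matrix.mulVec_zero] at h2
  funext j
  by_cases hj : j ∈ nonbasic β
  · exact hN j hj
  · simp only [nonbasic, Finset.mem_sdiff, Finset.mem_univ, true_and, not_not,
      Finset.mem_image] at hj
    obtain ⟨k, hk⟩ := hj
    have := congrFun hbasic k
    simpa [hk] using this

lemma aux_nonbasic_card {m n : ℕ} (β : Fin m ↪ Fin n) :
    (nonbasic β).card = n - m := by
  rw [nonbasic, Finset.card_sdiff_of_subset (Finset.subset_univ _),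
    Finset.card_image_of_injective _ β.injective]
  simp

/-- choosing `y⁰ = x̃ - x` for a better BFS `x̃` gives nonbasic support
of size at most `m`, hence at most `min{n-m-1, m-1}` consecutive degenerate
antistalling pivots at `x`. -/
theorem stmt10 (m n : ℕ) (A : Matrix (Fin m) (Fin n) ℝ) (b : Fin m → ℝ) (c : Fin n → ℝ)
    (hrank : A.rank = m)
    (x : Fin n → ℝ) (β : Fin m ↪ Fin n) (hx : IsBasicFeasible A b x β)
    (xt : Fin n → ℝ) (hxt : IsBFS A b xt)
    (himp : ∑ j, c j * xt j < ∑ j, c j * x j)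
    (y0 : Fin n → ℝ) (hy0 : y0 = xt - x) :
    ((nonbasic β).filter (fun j => 0 < y0 j)).card ≤ m ∧
    (∀ (k : ℕ) (βs : Fin (k + 1) → Fin m ↪ Fin n) (ys : Fin (k + 1) → Fin n → ℝ),
      βs 0 = β → ys 0 = y0 →
      (∀ t, IsUnit (subCols A (βs t))) →
      (∀ t, A.mulVec (ys t) = 0) →
      (∀ t, ∑ j, c j * ys t j < 0) →
      (∀ t, ∀ j ∈ nonbasic (βs t), 0 ≤ ys t j) →
      (∀ t : Fin k,
        ((nonbasic (βs t.succ)).filter (fun j => 0 < ys t.succ j)).card + 1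
          = ((nonbasic (βs t.castSucc)).filter (fun j => 0 < ys t.castSucc j)).card) →
      k ≤ min (n - m - 1) (m - 1)) := by
  obtain ⟨hUβ, ⟨hAx, hxnn⟩, hxN⟩ := hx
  obtain ⟨βt, hUt, ⟨hAxt, hxtnn⟩, hxtN⟩ := hxt
  have hcard1 : ((nonbasic β).filter (fun j => 0 < y0 j)).card ≤ m := by
    have hsub : (nonbasic β).filter (fun j => 0 < y0 j) ⊆ Finset.univ.image ⇑βt := by
      intro j hj
      simp only [Finset.mem_filter] at hj
      by_contra hjm
      have hjn : j ∈ nonbasic βt := by simp [nonbasic, hjm]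
      have h0 := hxtN j hjn
      have hy : y0 j = xt j := by simp [hy0, hxN j hj.1]
      rw [hy, h0] at hj
      exact lt_irrefl 0 hj.2
    calc _ ≤ (Finset.univ.image ⇑βt).card := Finset.card_le_card hsub
      _ ≤ (Finset.univ : Finset (Fin m)).card := Finset.card_image_le
      _ = m := by simp
  refine ⟨hcard1, ?_⟩
  intro k βs ys hβ0 hy0' hUs hAys hcs hnns hstep
  set C : Fin (k + 1) → ℕ :=
    fun t => ((nonbasic (βs t)).filter (fun j => 0 < ys t j)).card with hC
  have hCrec : ∀ i : ℕ, ∀ h : i < k + 1, C ⟨i, h⟩ + i = C 0 := by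
    intro i
    induction i with
    | zero => intro h; rfl
    | succ i ih =>
      intro h
      have hik : i < k := Nat.lt_of_succ_lt_succ h
      have hs := hstep ⟨i, hik⟩
      have h1 : (⟨i, hik⟩ : Fin k).succ = ⟨i + 1, h⟩ := rfl
      have h2 : (⟨i, hik⟩ : Fin k).castSucc = ⟨i, Nat.lt_of_lt_of_le hik (Nat.le_succ k)⟩ := rfl
      rw [h1, h2] at hs
      have hs' : C ⟨i + 1, h⟩ + 1 = C ⟨i, Nat.lt_of_lt_of_le hik (Nat.le_succ k)⟩ := hs
      have := ih (Nat.lt_of_lt_of_le hik (Nat.le_succ k))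
      omega
  have hlast : 1 ≤ C (Fin.last k) := by
    rw [Nat.one_le_iff_ne_zero]
    intro h0
    have hempty : (nonbasic (βs (Fin.last k))).filter (fun j => 0 < ys (Fin.last k) j) = ∅ :=
      Finset.card_eq_zero.mp h0
    have hzero : ∀ j ∈ nonbasic (βs (Fin.last k)), ys (Fin.last k) j = 0 := by
      intro j hj
      have hnot : ¬ (0 < ys (Fin.last k) j) := by
        intro hpos
        have : j ∈ (nonbasic (βs (Fin.last k))).filter (fun j => 0 < ys (Fin.last k) j) :=
          Finset.mem_filter.mpr ⟨hj, hpos⟩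
        simp [hempty] at this
      exact le_antisymm (not_lt.mp hnot) (hnns (Fin.last k) j hj)
    have hy0eq : ys (Fin.last k) = 0 :=
      aux_zero A (βs (Fin.last k)) (hUs (Fin.last k)) _ (hAys (Fin.last k)) hzero
    have := hcs (Fin.last k)
    rw [hy0eq] at this
    simp at this
  have hC0m : C 0 ≤ m := by
    have : C 0 = ((nonbasic β).filter (fun j => 0 < y0 j)).card := by
      simp only [hC, hβ0, hy0']
    rw [this]; exact hcard1
  have hC0nm : C 0 ≤ n - m := by
    calc C 0 ≤ (nonbasic (βs 0)).card := Finset.card_filter_le _ _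
      _ = n - m := aux_nonbasic_card _
  have hklast : C (Fin.last k) + k = C 0 := hCrec k (Nat.lt_succ_self k)
  have hk1 : k + 1 ≤ C 0 := by omega
  exact le_min (by omega) (by omega)
end

section
/- Let B be a non-optimal basis and B⋆ an optimal basis of the same optimal basic feasible solution x⋆ of min{cᵀx : Ax = b, x ≥ 0}, and let f ∈ N (= [n]\B) have negative reduced cost c̄_{N,f} < 0. Let z be the ray direction for f (z_B = -(A_B⁻¹A_N)_{·f}, z_f = 1, z = 0 on N\{f}). Then there exists an index i ∈ B ∩ N⋆ with (A_B⁻¹A_N)_{if} > 0 and x⋆_i = 0; in particular a (degenerate) simplex pivot with entering index f and leaving index i is possible. -/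
open Matrix Finset

section Aux
variable {m n : ℕ} (A : Matrix (Fin m) (Fin n) ℝ) (c : Fin n → ℝ) (β : Fin m ↪ Fin n)

lemma abar_basic (h : IsUnit (subCols A β)) (k i : Fin m) :
    Abar A β (β k) i = if i = k then 1 else 0 := by
  have hdet : IsUnit (subCols A β).det := (Matrix.isUnit_iff_isUnit_det _).mp h
  have : Abar A β (β k) i = ((subCols A β)⁻¹ * subCols A β) i k := by
    simp [Abar, Matrix.mulVec, Matrix.mul_apply, subCols, dotProduct]
  rw [this, Matrix.nonsing_inv_mul _ hdet, Matrix.one_apply]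

lemma redCost_basic (h : IsUnit (subCols A β)) (k : Fin m) :
    redCost A c β (β k) = 0 := by
  simp [redCost, abar_basic A β h k, ite_mul, Finset.sum_ite_eq']

lemma key_identity (h : IsUnit (subCols A β)) (y : Fin n → ℝ) (hy : A.mulVec y = 0) :
    ∑ j, redCost A c β j * y j = ∑ j, c j * y j := by
  have h0 : ∀ i : Fin m, ∑ j, Abar A β j i * y j = 0 := by
    intro i
    have : ∑ j, Abar A β j i * y j
        = ∑ r, (subCols A β)⁻¹ i r * (A.mulVec y) r := by
      simp only [Abar, Matrix.mulVec, dotProduct, Finset.sum_mul, Finset.mul_sum]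
      rw [Finset.sum_comm]
      congr 1; ext r; congr 1; ext j; ring
    rw [this, hy]; simp
  have : ∑ j, redCost A c β j * y j
      = ∑ j, c j * y j - ∑ i, c (β i) * ∑ j, Abar A β j i * y j := by
    simp only [redCost, sub_mul, Finset.sum_sub_distrib, Finset.sum_mul, Finset.mul_sum]
    rw [Finset.sum_comm (s := Finset.univ) (t := Finset.univ)]
    congr 1; congr 1; ext i; congr 1; ext j; ring
  rw [this]; simp [h0]

end Aux
/-- at a non-optimal basis `B` of an optimal BFS `x⋆`, for any
`f ∈ N` with negative reduced cost there is a leaving index `i ∈ B ∩ N⋆` with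
`Ā_{if} > 0` and `x⋆_i = 0`, so a degenerate simplex pivot is possible. -/
theorem stmt16 (m n : ℕ) (A : Matrix (Fin m) (Fin n) ℝ) (b : Fin m → ℝ) (c : Fin n → ℝ)
    (hrank : A.rank = m)
    (xstar : Fin n → ℝ)
    (β : Fin m ↪ Fin n) (hβ : IsBasicFeasible A b xstar β)
    (βstar : Fin m ↪ Fin n) (hβstar : IsBasicFeasible A b xstar βstar)
    (hopt : ∀ j ∈ nonbasic βstar, 0 ≤ redCost A c βstar j)
    (f : Fin n) (hf : f ∈ nonbasic β) (hred : redCost A c β f < 0) :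
    ∃ i : Fin m, β i ∈ nonbasic βstar ∧ 0 < Abar A β f i ∧ xstar (β i) = 0 := by
  classical
  have hβu : IsUnit (subCols A β) := hβ.1
  have hβsu : IsUnit (subCols A βstar) := hβstar.1
  have hdet : IsUnit (subCols A β).det := (Matrix.isUnit_iff_isUnit_det _).mp hβu
  have hfim : ∀ i : Fin m, β i ≠ f := by
    intro i hi
    have : f ∈ Finset.univ.image ⇑β := Finset.mem_image.mpr ⟨i, Finset.mem_univ i, hi⟩
    simp [nonbasic] at hf
    exact hf i hi
  -- the ray direction z
  set z : Fin n → ℝ :=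
    fun j => (if j = f then (1:ℝ) else 0) - ∑ i, (if β i = j then Abar A β f i else 0)
    with hz
  have hz_β : ∀ i : Fin m, z (β i) = -Abar A β f i := by
    intro i
    have h1 : ∑ i', (if β i' = β i then Abar A β f i' else 0) = Abar A β f i := by
      rw [Finset.sum_eq_single i]
      · simp
      · intro b _ hb; simp [β.injective.ne hb]
      · simp
    simp [hz, hfim i, h1]
  have hz_f : z f = 1 := by
    have h1 : ∑ i, (if β i = f then Abar A β f i else 0) = 0 := by
      apply Finset.sum_eq_zero; intro i _; simp [hfim i]
    simp [hz, h1]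
  have hz_other : ∀ j, j ≠ f → (∀ i, β i ≠ j) → z j = 0 := by
    intro j hjf hjim
    have h1 : ∑ i, (if β i = j then Abar A β f i else 0) = 0 := by
      apply Finset.sum_eq_zero; intro i _; simp [hjim i]
    simp [hz, hjf, h1]
  -- A z = 0
  have hAz : A.mulVec z = 0 := by
    funext r
    have e1 : ∑ j, A r j * (if j = f then (1:ℝ) else 0) = A r f := by
      simp [mul_ite, Finset.sum_ite_eq']
    have e2 : ∑ j, A r j * ∑ i, (if β i = j then Abar A β f i else 0)
        = ∑ i, A r (β i) * Abar A β f i := by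
      simp_rw [Finset.mul_sum]
      rw [Finset.sum_comm]
      apply Finset.sum_congr rfl; intro i _
      rw [Finset.sum_eq_single (β i)] <;> simp +contextual [mul_ite, eq_comm]
    have e3 : ∑ i, A r (β i) * Abar A β f i = A r f := by
      have : ∑ i, A r (β i) * Abar A β f i
          = (subCols A β *ᵥ ((subCols A β)⁻¹ *ᵥ (fun s => A s f))) r := by
        simp [Matrix.mulVec, dotProduct, subCols, Abar]
      rw [this, Matrix.mulVec_mulVec, Matrix.mul_nonsing_inv _ hdet]
      simp
    have : (A.mulVec z) r = ∑ j, A r j * z j := rfl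
    rw [this]
    simp only [hz, mul_sub, Finset.sum_sub_distrib, e1, e2, e3, sub_self, Pi.zero_apply]
  -- cᵀ z = redCost at f
  have hcz : ∑ j, c j * z j = redCost A c β f := by
    have e1 : ∑ j, c j * (if j = f then (1:ℝ) else 0) = c f := by
      simp [mul_ite, Finset.sum_ite_eq']
    have e2 : ∑ j, c j * ∑ i, (if β i = j then Abar A β f i else 0)
        = ∑ i, c (β i) * Abar A β f i := by
      simp_rw [Finset.mul_sum]
      rw [Finset.sum_comm]
      apply Finset.sum_congr rfl; intro i _
      rw [Finset.sum_eq_single (β i)] <;> simp +contextual [mul_ite, eq_comm]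
    simp only [hz, mul_sub, Finset.sum_sub_distrib, e1, e2, redCost]
    congr 1
    apply Finset.sum_congr rfl; intro i _; ring
  -- main argument, by contradiction
  by_contra hcon
  push_neg at hcon
  have hnonneg : 0 ≤ ∑ j, redCost A c βstar j * z j := by
    apply Finset.sum_nonneg
    intro j _
    by_cases hjB : ∃ k, βstar k = j
    · obtain ⟨k, rfl⟩ := hjB
      simp [redCost_basic A c βstar hβsu k]
    · have hjN : j ∈ nonbasic βstar := by
        simp [nonbasic]; intro k hk; exact hjB ⟨k, hk⟩
      have hrc : 0 ≤ redCost A c βstar j := hopt j hjN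
      have hzj : 0 ≤ z j := by
        by_cases hji : ∃ i, β i = j
        · obtain ⟨i, rfl⟩ := hji
          have hx0 : xstar (β i) = 0 := hβstar.2.2 _ hjN
          have := hcon i hjN
          have hAle : Abar A β f i ≤ 0 := by
            by_contra hA
            exact (this (lt_of_not_ge hA)) hx0
          rw [hz_β i]; linarith
        · by_cases hjf : j = f
          · rw [hjf, hz_f]; norm_num
          · rw [hz_other j hjf (fun i hi => hji ⟨i, hi⟩)]
      exact mul_nonneg hrc hzj
  have := key_identity A c βstar hβsu z hAz
  rw [this, hcz] at hnonneg
  linarith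
end
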